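/- arXiv:1902.09771 — 2 statements merged into one kernel-verified Lean document; each statement's English description precedes it below -/
import Mathlib

section
/- Let Ã be a commutative ring and I ⊆ Ã an ideal with I² = 0. Work in the ring Ã((w)) of formal Laurent series over Ã in the variable w = z⁻¹ (series with support bounded below in w, i.e. only finitely many positive powers of z). Let D ∈ Ã((w)) be such that the coefficient of wⁿ in D lies in I for every n < 0, and the coefficient of w⁰ in D lies in 1 + I. Then there exists a unique γ ∈ Ã((w)) with: the coefficient of wⁿ in γ is 0 for all n > 0, lies in I for all n < 0, and the coefficient of w⁰ in γ lies in 1 + I (i.e. γ ∈ 1 + I[z]), such that the product γ·D has coefficient of w⁰ equal to 1 and coefficient of wⁿ equal to 0 for all n < 0 (i.e. γ·D ∈ 1 + z⁻¹Ã[[z⁻¹]]). -/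
open Finset HahnSeries

noncomputable def wpC {A : Type*} [CommRing A] (D : LaurentSeries A) (N : ℕ) : ℕ → A
  | m => (if m = N then (1 : A) else 0) - D.coeff ((m : ℤ) - N) -
      ∑ i ∈ (Finset.range m).attach, D.coeff ((m : ℤ) - (i.1 : ℤ)) * wpC D N i.1
  decreasing_by exact Finset.mem_range.mp i.2

theorem wpC_eq {A : Type*} [CommRing A] (D : LaurentSeries A) (N m : ℕ) :
    wpC D N m = (if m = N then (1 : A) else 0) - D.coeff ((m : ℤ) - N) -
      ∑ i ∈ Finset.range m, D.coeff ((m : ℤ) - (i : ℤ)) * wpC D N i := by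
  rw [wpC, Finset.sum_attach (Finset.range m) (fun i => D.coeff ((m : ℤ) - (i : ℤ)) * wpC D N i)]

theorem wp_coeff_sum {A : Type*} [CommRing A] (s : Finset ℕ) (f : ℕ → LaurentSeries A) (n : ℤ) :
    (∑ m ∈ s, f m).coeff n = ∑ m ∈ s, (f m).coeff n :=
  map_sum (HahnSeries.coeff.addMonoidHom n) f s

theorem single_mul_coeff' {A : Type*} [CommRing A] (b : ℤ) (r : A) (x : LaurentSeries A) (n : ℤ) :
    (HahnSeries.single b r * x).coeff n = r * x.coeff (n - b) := by
  have h := HahnSeries.coeff_single_mul_add (r := r) (x := x) (a := n - b) (b := b)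
  rwa [sub_add_cancel] at h

theorem wp_exists {A : Type*} [CommRing A]
    (I : Ideal A) (hI : I ^ 2 = ⊥) (D : LaurentSeries A)
    (hDneg : ∀ n : ℤ, n < 0 → D.coeff n ∈ I)
    (hD0 : D.coeff 0 - 1 ∈ I) :
    ∃ γ : LaurentSeries A,
      ((∀ n : ℤ, 0 < n → γ.coeff n = 0) ∧
        (∀ n : ℤ, n < 0 → γ.coeff n ∈ I) ∧
        γ.coeff 0 - 1 ∈ I) ∧
      ((γ * D).coeff 0 = 1 ∧ ∀ n : ℤ, n < 0 → (γ * D).coeff n = 0) := by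
  have hmul0 : ∀ a b : A, a ∈ I → b ∈ I → a * b = 0 := by
    intro a b ha hb
    have h := Ideal.mul_mem_mul ha hb
    rwa [← sq, hI, Ideal.mem_bot] at h
  obtain ⟨N, hN⟩ : ∃ N : ℕ, ∀ n : ℤ, n < -(N : ℤ) → D.coeff n = 0 := by
    refine ⟨(-D.order).toNat, fun n hn => HahnSeries.coeff_eq_zero_of_lt_order ?_⟩
    have := Int.self_le_toNat (-D.order)
    omega
  set c : ℕ → A := wpC D N with hcdef
  -- all relevant coefficients lie in I
  have hcI : ∀ m : ℕ, m ≤ N → c m ∈ I := by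
    intro m
    induction m using Nat.strong_induction_on with
    | _ m ih =>
      intro hm
      rw [hcdef, wpC_eq]
      refine Ideal.sub_mem _ ?_ ?_
      · by_cases hmN : m = N
        · subst hmN
          rw [if_pos rfl, sub_self, ← neg_sub (D.coeff 0) 1]
          exact neg_mem hD0
        · rw [if_neg hmN, zero_sub]
          exact neg_mem (hDneg _ (by
            have : m < N := lt_of_le_of_ne hm hmN
            omega))
      · exact Ideal.sum_mem _ fun i hi =>
          Ideal.mul_mem_left _ _ (ih i (Finset.mem_range.mp hi)
            (le_trans (Nat.le_of_lt (Finset.mem_range.mp hi)) hm))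
  -- the candidate
  set g : LaurentSeries A := ∑ m ∈ Finset.range (N + 1), HahnSeries.single ((m : ℤ) - N) (c m)
    with hgdef
  set gamma : LaurentSeries A := 1 + g with hgammadef
  have hgc : ∀ n : ℤ, g.coeff n =
      ∑ m ∈ Finset.range (N + 1), (if n = (m : ℤ) - N then c m else 0) := by
    intro n
    rw [hgdef, wp_coeff_sum]
    refine Finset.sum_congr rfl fun m _ => ?_
    by_cases hc : n = (m : ℤ) - N
    · rw [if_pos hc, hc, HahnSeries.coeff_single_same]
    · rw [if_neg hc, HahnSeries.coeff_single_of_ne hc]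
  have hgamc : ∀ n : ℤ, gamma.coeff n = (if n = 0 then 1 else 0) +
      ∑ m ∈ Finset.range (N + 1), (if n = (m : ℤ) - N then c m else 0) := by
    intro n
    rcases eq_or_ne n 0 with rfl | hne
    · rw [if_pos rfl, hgammadef, HahnSeries.coeff_add, hgc, HahnSeries.coeff_one, if_pos rfl]
    · rw [if_neg hne, hgammadef, HahnSeries.coeff_add, hgc, HahnSeries.coeff_one, if_neg hne]
  -- product coefficient formula
  have hprod : ∀ n : ℤ, (gamma * D).coeff n =
      D.coeff n + ∑ m ∈ Finset.range (N + 1), c m * D.coeff (n - ((m : ℤ) - N)) := by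
    intro n
    rw [hgammadef, add_mul, one_mul, HahnSeries.coeff_add, hgdef, Finset.sum_mul,
      wp_coeff_sum]
    exact congrArg _ (Finset.sum_congr rfl fun m _ => single_mul_coeff' _ _ _ _)
  -- the key computation
  have hkey : ∀ n : ℤ, n ≤ 0 → (gamma * D).coeff n = if n = 0 then 1 else 0 := by
    intro n hn
    rw [hprod]
    by_cases hbig : n + (N : ℤ) < 0
    · rw [hN n (by omega), if_neg (by omega), Finset.sum_eq_zero, add_zero]
      intro m hm
      exact hmul0 _ _ (hcI m (Nat.lt_succ_iff.mp (Finset.mem_range.mp hm))) (hDneg _ (by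
        have : (0 : ℤ) ≤ (m : ℤ) := Int.natCast_nonneg m
        omega))
    · push_neg at hbig
      obtain ⟨m₀, hm₀z⟩ : ∃ m₀ : ℕ, (m₀ : ℤ) = n + N :=
        ⟨(n + N).toNat, Int.toNat_of_nonneg hbig⟩
      have hm₀le : m₀ ≤ N := by omega
      rw [← Finset.sum_range_add_sum_Ico _ (show m₀ + 1 ≤ N + 1 by omega)]
      have hIco : ∑ m ∈ Finset.Ico (m₀ + 1) (N + 1),
          c m * D.coeff (n - ((m : ℤ) - N)) = 0 := by
        refine Finset.sum_eq_zero fun m hm => ?_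
        obtain ⟨hma, hmb⟩ := Finset.mem_Ico.mp hm
        exact hmul0 _ _ (hcI m (by omega)) (hDneg _ (by
          have : (m₀ : ℤ) < (m : ℤ) := by exact_mod_cast hma
          omega))
      rw [hIco, add_zero, Finset.sum_range_succ,
        show n - ((m₀ : ℤ) - N) = 0 by omega]
      have hDc : c m₀ * D.coeff 0 = c m₀ := by
        have he : c m₀ * D.coeff 0 = c m₀ * (D.coeff 0 - 1) + c m₀ := by ring
        rw [he, hmul0 _ _ (hcI m₀ hm₀le) hD0, zero_add]
      rw [hDc]
      have hsum : ∑ m ∈ Finset.range m₀, c m * D.coeff (n - ((m : ℤ) - N)) =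
          ∑ i ∈ Finset.range m₀, D.coeff ((m₀ : ℤ) - (i : ℤ)) * c i := by
        refine Finset.sum_congr rfl fun i _ => ?_
        rw [show n - ((i : ℤ) - N) = (m₀ : ℤ) - i by omega, mul_comm]
      rw [hsum, hcdef]
      rcases eq_or_ne n 0 with rfl | hne
      · have hm₀N : m₀ = N := by omega
        subst hm₀N
        rw [if_pos rfl, wpC_eq, if_pos rfl, sub_self]
        ring
      · have hm₀N : m₀ ≠ N := by omega
        rw [if_neg hne, wpC_eq, if_neg hm₀N,
          show ((m₀ : ℤ) - N) = n by omega]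
        ring
  refine ⟨gamma, ⟨?_, ?_, ?_⟩, ?_, ?_⟩
  · intro n hn
    rw [hgamc, if_neg (by omega), Finset.sum_eq_zero, add_zero]
    intro m hm
    rw [if_neg]
    have : (0 : ℤ) ≤ (m : ℤ) := Int.natCast_nonneg m
    have hmlt : m < N + 1 := Finset.mem_range.mp hm
    omega
  · intro n hn
    rw [hgamc, if_neg (by omega), zero_add]
    refine Ideal.sum_mem _ fun m hm => ?_
    by_cases hcase : n = (m : ℤ) - N
    · rw [if_pos hcase]
      refine hcI m ?_
      have hmlt : m < N + 1 := Finset.mem_range.mp hm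
      omega
    · rw [if_neg hcase]; exact Ideal.zero_mem _
  · rw [hgamc, if_pos rfl, add_sub_cancel_left]
    refine Ideal.sum_mem _ fun m hm => ?_
    by_cases hcase : (0 : ℤ) = (m : ℤ) - N
    · rw [if_pos hcase]
      refine hcI m ?_
      have hmlt : m < N + 1 := Finset.mem_range.mp hm
      omega
    · rw [if_neg hcase]; exact Ideal.zero_mem _
  · rw [hkey 0 le_rfl, if_pos rfl]
  · intro n hn
    rw [hkey n (le_of_lt hn), if_neg (by omega)]

theorem wp_unique {A : Type*} [CommRing A]
    (I : Ideal A) (hI : I ^ 2 = ⊥) (D : LaurentSeries A)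
    (hDneg : ∀ n : ℤ, n < 0 → D.coeff n ∈ I)
    (hD0 : D.coeff 0 - 1 ∈ I)
    (γ₁ γ₂ : LaurentSeries A)
    (h1 : ∀ n : ℤ, 0 < n → γ₁.coeff n = 0) (h2 : ∀ n : ℤ, n < 0 → γ₁.coeff n ∈ I)
    (h3 : γ₁.coeff 0 - 1 ∈ I) (h4 : (γ₁ * D).coeff 0 = 1)
    (h5 : ∀ n : ℤ, n < 0 → (γ₁ * D).coeff n = 0)
    (h1' : ∀ n : ℤ, 0 < n → γ₂.coeff n = 0) (h2' : ∀ n : ℤ, n < 0 → γ₂.coeff n ∈ I)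
    (h3' : γ₂.coeff 0 - 1 ∈ I) (h4' : (γ₂ * D).coeff 0 = 1)
    (h5' : ∀ n : ℤ, n < 0 → (γ₂ * D).coeff n = 0) : γ₁ = γ₂ := by
  have hmul0 : ∀ a b : A, a ∈ I → b ∈ I → a * b = 0 := by
    intro a b ha hb
    have h := Ideal.mul_mem_mul ha hb
    rwa [← sq, hI, Ideal.mem_bot] at h
  by_contra hne
  set h : LaurentSeries A := γ₁ - γ₂ with hh
  have hne0 : h ≠ 0 := sub_ne_zero.mpr hne
  have hcoeffI : ∀ n : ℤ, h.coeff n ∈ I := by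
    intro n
    rw [hh, HahnSeries.coeff_sub]
    rcases lt_trichotomy n 0 with hn | hn | hn
    · exact Ideal.sub_mem _ (h2 n hn) (h2' n hn)
    · subst hn
      have he : γ₁.coeff 0 - γ₂.coeff 0 = (γ₁.coeff 0 - 1) - (γ₂.coeff 0 - 1) := by ring
      rw [he]; exact Ideal.sub_mem _ h3 h3'
    · rw [h1 n hn, h1' n hn, sub_zero]; exact Ideal.zero_mem _
  have hpos : ∀ n : ℤ, 0 < n → h.coeff n = 0 := by
    intro n hn; rw [hh, HahnSeries.coeff_sub, h1 n hn, h1' n hn, sub_zero]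
  have hprod0 : ∀ n : ℤ, n ≤ 0 → (h * D).coeff n = 0 := by
    intro n hn
    rw [hh, sub_mul, HahnSeries.coeff_sub]
    rcases eq_or_lt_of_le hn with hn0 | hn0
    · subst hn0; rw [h4, h4', sub_self]
    · rw [h5 n hn0, h5' n hn0, sub_zero]
  have hsupp : h.support.Nonempty := support_nonempty_iff.2 hne0
  set n₀ := h.isWF_support.min hsupp with hn₀def
  have hn₀mem : n₀ ∈ h.support := h.isWF_support.min_mem hsupp
  have hmin : ∀ i ∈ h.support, n₀ ≤ i := fun i hi => Set.IsWF.min_le _ hsupp hi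
  have hn₀ne : h.coeff n₀ ≠ 0 := hn₀mem
  have hn₀le : n₀ ≤ 0 := by
    by_contra hc; push_neg at hc; exact hn₀ne (hpos n₀ hc)
  have hkey := hprod0 n₀ hn₀le
  rw [HahnSeries.coeff_mul, Finset.sum_eq_single (n₀, (0:ℤ))] at hkey
  · apply hn₀ne
    have he : h.coeff n₀ = h.coeff n₀ * D.coeff 0 - h.coeff n₀ * (D.coeff 0 - 1) := by ring
    rw [he, hkey, hmul0 _ _ (hcoeffI n₀) hD0, sub_zero]
  · rintro ⟨i, j⟩ hmem hne'
    rw [Finset.mem_addAntidiagonal] at hmem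
    obtain ⟨hi, hj, hij⟩ := hmem
    have hjne : j ≠ 0 := by
      rintro rfl
      simp only [add_zero] at hij
      exact hne' (by rw [hij])
    have hjlt : j < 0 := by have := hmin i hi; omega
    exact hmul0 _ _ (hcoeffI i) (hDneg j hjlt)
  · intro hnot
    have hD : D.coeff 0 = 0 := by
      by_contra hD
      exact hnot (Finset.mem_addAntidiagonal.mpr ⟨hn₀mem, hD, add_zero n₀⟩)
    rw [hD, mul_zero]

/-- Weierstraß-preparation-type lemma: Let `I² = 0` in a
commutative ring `A`, and work in the Laurent series ring `A((w))` with
`w = z⁻¹`.  If `D ∈ I[z] + 1 + z⁻¹A[[z⁻¹]]` (i.e. the coefficient of `wⁿ`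
lies in `I` for `n < 0` and the coefficient of `w⁰` lies in `1 + I`), then
there is a unique `γ ∈ 1 + I[z]` (coefficient of `wⁿ` zero for `n > 0`, in `I`
for `n < 0`, in `1 + I` for `n = 0`) such that
`γ · D ∈ 1 + z⁻¹A[[z⁻¹]]` (the product has `w⁰`-coefficient `1` and
`wⁿ`-coefficient `0` for all `n < 0`). -/
theorem weierstrass_preparation_squareZero {A : Type*} [CommRing A]
    (I : Ideal A) (hI : I ^ 2 = ⊥) (D : LaurentSeries A)
    (hDneg : ∀ n : ℤ, n < 0 → D.coeff n ∈ I)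
    (hD0 : D.coeff 0 - 1 ∈ I) :
    ∃! γ : LaurentSeries A,
      ((∀ n : ℤ, 0 < n → γ.coeff n = 0) ∧
        (∀ n : ℤ, n < 0 → γ.coeff n ∈ I) ∧
        γ.coeff 0 - 1 ∈ I) ∧
      ((γ * D).coeff 0 = 1 ∧ ∀ n : ℤ, n < 0 → (γ * D).coeff n = 0) := by
  obtain ⟨γ, hγ⟩ := wp_exists I hI D hDneg hD0
  refine ⟨γ, hγ, fun y hy => ?_⟩
  obtain ⟨⟨a1, a2, a3⟩, b1, b2⟩ := hy
  obtain ⟨⟨c1, c2, c3⟩, d1, d2⟩ := hγ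
  exact wp_unique I hI D hDneg hD0 y γ a1 a2 a3 b1 b2 c1 c2 c3 d1 d2
end

section
/- Let Ã be a commutative ring and I ⊆ Ã an ideal with I² = 0, and work in the Laurent series ring Ã((w)) with w = z⁻¹ as above. Suppose D and D′ both satisfy: coefficient of wⁿ in I for all n < 0 and coefficient of w⁰ in 1 + I. Let γ, γ′, γ″ ∈ 1 + I[z] be the unique elements (as in the preparation lemma) with γD ∈ 1 + z⁻¹Ã[[z⁻¹]], γ′D′ ∈ 1 + z⁻¹Ã[[z⁻¹]], and γ″(D·D′) ∈ 1 + z⁻¹Ã[[z⁻¹]]. Then the product D·D′ again satisfies the same hypotheses, and γ″ = γ·γ′. -/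
/-!
Both `γ''` and `γ γ'` lie in `1 + I[z]` and turn `D D'` into an element of `1 + z⁻¹A[[z⁻¹]]`
(for `γ γ'` because `(γ γ') (D D') = (γ D) (γ' D')`), so the claim is the uniqueness half of the
preparation lemma. For uniqueness, the difference `δ` of two solutions has all coefficients in `I`
and none in positive degree, while `δ D` vanishes in degrees `≤ 0`. As `D - 1` has coefficients in
`I` in degrees `≤ 0` and `I² = 0`, the coefficient of `δ (D - 1)` at the order of `δ` only involves
coefficients of `δ` below its order, so it vanishes. Hence `δ` and `δ D` agree at the order of
`δ`, where `δ D` vanishes: so `δ = 0`.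
-/

/-- `D ∈ I[z] + 1 + z⁻¹A[[z⁻¹]]` inside the Laurent series ring `A((w))` with
`w = z⁻¹`: the coefficient of `wⁿ` lies in `I` for all `n < 0` and the
coefficient of `w⁰` lies in `1 + I`. -/
def IsPolyPlusOnePlusTail {A : Type*} [CommRing A] (I : Ideal A)
    (D : LaurentSeries A) : Prop :=
  (∀ n : ℤ, n < 0 → D.coeff n ∈ I) ∧ D.coeff 0 - 1 ∈ I

/-- `γ ∈ 1 + I[z]`: the coefficient of `wⁿ` vanishes for `n > 0`, lies in `I`
for `n < 0`, and the coefficient of `w⁰` lies in `1 + I`. -/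
def IsOnePlusIPoly {A : Type*} [CommRing A] (I : Ideal A)
    (γ : LaurentSeries A) : Prop :=
  (∀ n : ℤ, 0 < n → γ.coeff n = 0) ∧ (∀ n : ℤ, n < 0 → γ.coeff n ∈ I) ∧
    γ.coeff 0 - 1 ∈ I

/-- `x ∈ 1 + z⁻¹A[[z⁻¹]]`: the coefficient of `w⁰` is `1` and the coefficients
of `wⁿ` vanish for `n < 0`. -/
def IsOnePlusTail {A : Type*} [CommRing A] (x : LaurentSeries A) : Prop :=
  x.coeff 0 = 1 ∧ ∀ n : ℤ, n < 0 → x.coeff n = 0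

namespace HahnSeries

theorem coeff_mul_mem_of_forall_mem {Γ R : Type*} [AddCommMonoid Γ] [PartialOrder Γ]
    [IsOrderedCancelAddMonoid Γ] [CommSemiring R] {I : Ideal R} {S : Set Γ}
    (hS : ∀ i j, i + j ∈ S → i ∈ S ∨ j ∈ S) {x y : R⟦Γ⟧}
    (hx : ∀ n ∈ S, x.coeff n ∈ I) (hy : ∀ n ∈ S, y.coeff n ∈ I) {n : Γ} (hn : n ∈ S) :
    (x * y).coeff n ∈ I := by
  rw [coeff_mul]
  refine I.sum_mem fun ij hij => ?_
  rw [Finset.mem_antidiagonal] at hij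
  rcases hS ij.1 ij.2 (hij.2.2 ▸ hn) with h | h
  · exact I.mul_mem_right _ (hx _ h)
  · exact I.mul_mem_left _ (hy _ h)

theorem eq_zero_of_coeff_mul_eq_zero {Γ R : Type*} [AddCommMonoid Γ] [LinearOrder Γ]
    [IsOrderedCancelAddMonoid Γ] [CommRing R] {I : Ideal R} (hI : I ^ 2 = ⊥) {δ D : R⟦Γ⟧}
    (hδ : ∀ n, δ.coeff n ∈ I) (hδ_pos : ∀ n, 0 < n → δ.coeff n = 0)
    (hD : ∀ n ≤ 0, (D - 1).coeff n ∈ I) (hδD : ∀ n ≤ 0, (δ * D).coeff n = 0) : δ = 0 := by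
  by_contra hne
  have hord : δ.order ≤ 0 := not_lt.1 fun h => hne (coeff_order_eq_zero.1 (hδ_pos _ h))
  have hcorr : (δ * (D - 1)).coeff δ.order = 0 := by
    rw [coeff_mul]
    refine Finset.sum_eq_zero fun ij hij => ?_
    rw [Finset.mem_antidiagonal] at hij
    rcases le_or_gt ij.2 0 with h | h
    · rw [← Ideal.mem_bot, ← hI, pow_two]
      exact Ideal.mul_mem_mul (hδ _) (hD _ h)
    · have hlt : ij.1 < δ.order := hij.2.2 ▸ lt_add_of_pos_right _ h
      rw [coeff_eq_zero_of_lt_order hlt, zero_mul]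
  refine hne (coeff_order_eq_zero.1 ?_)
  have hsplit : δ * D = δ + δ * (D - 1) := by ring
  simpa [hsplit, hcorr] using hδD _ hord

end HahnSeries

section Preparation

variable {A : Type*} [CommRing A] {I : Ideal A} {x y D γ γ₂ : LaurentSeries A}

theorem isPolyPlusOnePlusTail_iff :
    IsPolyPlusOnePlusTail I x ↔ ∀ n ≤ 0, (x - 1).coeff n ∈ I := by
  simp only [IsPolyPlusOnePlusTail, HahnSeries.coeff_sub, HahnSeries.coeff_one]
  constructor
  · rintro ⟨hneg, hzero⟩ n hn
    rcases hn.lt_or_eq with h | rfl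
    · simpa [h.ne] using hneg n h
    · simpa using hzero
  · intro h
    exact ⟨fun n hn => by simpa [hn.ne] using h n hn.le, by simpa using h 0 le_rfl⟩

theorem isOnePlusTail_iff_isPolyPlusOnePlusTail_bot :
    IsOnePlusTail x ↔ IsPolyPlusOnePlusTail ⊥ x := by
  simp [IsOnePlusTail, IsPolyPlusOnePlusTail, sub_eq_zero, and_comm]

theorem IsPolyPlusOnePlusTail.mul (hx : IsPolyPlusOnePlusTail I x)
    (hy : IsPolyPlusOnePlusTail I y) : IsPolyPlusOnePlusTail I (x * y) := by
  rw [isPolyPlusOnePlusTail_iff] at *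
  intro n hn
  have hexpand : x * y - 1 = (x - 1) + (y - 1) + (x - 1) * (y - 1) := by ring
  rw [hexpand, HahnSeries.coeff_add, HahnSeries.coeff_add]
  refine add_mem (add_mem (hx n hn) (hy n hn)) ?_
  exact HahnSeries.coeff_mul_mem_of_forall_mem (S := Set.Iic 0)
    (fun i j h => by simp only [Set.mem_Iic] at *; omega) hx hy hn

theorem IsOnePlusTail.mul (hx : IsOnePlusTail x) (hy : IsOnePlusTail y) :
    IsOnePlusTail (x * y) := by
  rw [isOnePlusTail_iff_isPolyPlusOnePlusTail_bot] at *
  exact hx.mul hy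

theorem IsOnePlusIPoly.mul (hx : IsOnePlusIPoly I x) (hy : IsOnePlusIPoly I y) :
    IsOnePlusIPoly I (x * y) := by
  refine ⟨fun n hn => ?_, IsPolyPlusOnePlusTail.mul hx.2 hy.2⟩
  rw [← Ideal.mem_bot]
  exact HahnSeries.coeff_mul_mem_of_forall_mem (S := Set.Ioi 0)
    (fun i j h => by simp only [Set.mem_Ioi] at *; omega)
    (fun n hn => by simp [hx.1 n hn]) (fun n hn => by simp [hy.1 n hn]) hn

theorem IsOnePlusIPoly.coeff_sub_one_mem (hγ : IsOnePlusIPoly I γ) (n : ℤ) :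
    (γ - 1).coeff n ∈ I := by
  rcases le_or_gt n 0 with hn | hn
  · exact isPolyPlusOnePlusTail_iff.1 hγ.2 n hn
  · simp [HahnSeries.coeff_one, hn.ne', hγ.1 n hn]

theorem IsOnePlusIPoly.eq_of_isOnePlusTail_mul (hI : I ^ 2 = ⊥)
    (hD : IsPolyPlusOnePlusTail I D) (hγ : IsOnePlusIPoly I γ) (hγ₂ : IsOnePlusIPoly I γ₂)
    (hγD : IsOnePlusTail (γ * D)) (hγ₂D : IsOnePlusTail (γ₂ * D)) : γ = γ₂ := by
  rw [isOnePlusTail_iff_isPolyPlusOnePlusTail_bot, isPolyPlusOnePlusTail_iff] at hγD hγ₂D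
  rw [← sub_eq_zero]
  refine HahnSeries.eq_zero_of_coeff_mul_eq_zero hI (fun n => ?_) (fun n hn => ?_)
    (isPolyPlusOnePlusTail_iff.1 hD) (fun n hn => ?_)
  · rw [show γ - γ₂ = (γ - 1) - (γ₂ - 1) by ring, HahnSeries.coeff_sub]
    exact sub_mem (hγ.coeff_sub_one_mem n) (hγ₂.coeff_sub_one_mem n)
  · rw [HahnSeries.coeff_sub, hγ.1 n hn, hγ₂.1 n hn, sub_zero]
  · rw [show (γ - γ₂) * D = (γ * D - 1) - (γ₂ * D - 1) by ring, HahnSeries.coeff_sub,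
      Ideal.mem_bot.1 (hγD n hn), Ideal.mem_bot.1 (hγ₂D n hn), sub_zero]

end Preparation

/-- multiplicativity of the preparation lemma: if `I² = 0`,
`D, D' ∈ I[z] + 1 + z⁻¹A[[z⁻¹]]`, and `γ, γ', γ'' ∈ 1 + I[z]` are the unique
elements with `γD`, `γ'D'`, `γ''(D·D')` in `1 + z⁻¹A[[z⁻¹]]`, then `D·D'`
again lies in `I[z] + 1 + z⁻¹A[[z⁻¹]]` and `γ'' = γ·γ'`. -/
theorem weierstrass_preparation_multiplicative {A : Type*} [CommRing A]
    (I : Ideal A) (hI : I ^ 2 = ⊥) (D D' : LaurentSeries A)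
    (hD : IsPolyPlusOnePlusTail I D) (hD' : IsPolyPlusOnePlusTail I D')
    (γ γ' γ'' : LaurentSeries A)
    (hγ : IsOnePlusIPoly I γ) (hγD : IsOnePlusTail (γ * D))
    (hγ' : IsOnePlusIPoly I γ') (hγ'D' : IsOnePlusTail (γ' * D'))
    (hγ'' : IsOnePlusIPoly I γ'') (hγ''DD' : IsOnePlusTail (γ'' * (D * D'))) :
    IsPolyPlusOnePlusTail I (D * D') ∧ γ'' = γ * γ' := by
  have hDD' : IsPolyPlusOnePlusTail I (D * D') := hD.mul hD'
  have hγγ'DD' : IsOnePlusTail (γ * γ' * (D * D')) := by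
    rw [mul_mul_mul_comm]
    exact hγD.mul hγ'D'
  exact ⟨hDD', hγ''.eq_of_isOnePlusTail_mul hI hDD' (hγ.mul hγ') hγ''DD' hγγ'DD'⟩
end
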